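/- Without the nonnegativity constraint, L̂ = aX + b + cᵀY + L with a > 0, b ∈ ℝ, c ∈ ℝ^{d-1} chosen so that E_μ[L̂] = 1, E_μ[(L̂-L)²] = δ, E_μ[L̂Y] = E_μ[LY], achieves the maximum of E_μ[L'X] over all square-integrable L' (not necessarily nonnegative) satisfying these three constraints, and the maximal value equals E_μ[LX] + sqrt(δ · det(Σ_μ(X,Y))/det(Σ_μ(Y))). -/

import Mathlib

/-! With `G = L̂ - L = aX + b + cᵀY`, the constraints say that `G` is orthogonal in `L²(μ)` to `1`
and to the `Yᵢ`, with `E[G²] = δ`; for a competitor, `D = L' - L` is orthogonal to the same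
functions and `E[D²] ≤ δ`. Hence `a E[DX] = E[DG] ≤ (E[D²] + E[G²]) / 2 ≤ δ = a E[GX]`.

For the value, `G` is centered, so the covariance matrix `Σ(X,Y)` sends `v = (a, c)` to the vector
`(E[GX], E[GY₁], …) = (δ / a, 0, …, 0)`. Replacing the first column of `Σ(X,Y)` by `Σ(X,Y) v`
multiplies the determinant by `a`, and expanding along that column gives
`a det Σ(X,Y) = (δ / a) det Σ(Y)`. -/

open MeasureTheory Matrix

/-- The covariance of two real random variables under `μ`. -/
noncomputable def covar {Ω : Type*} [MeasurableSpace Ω] (μ : Measure Ω) (f g : Ω → ℝ) : ℝ :=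
  ∫ ω, (f ω - ∫ x, f x ∂μ) * (g ω - ∫ x, g x ∂μ) ∂μ

open ProbabilityTheory

theorem Matrix.apply_zero_mul_det_eq_of_mulVec_succ_eq_zero {R : Type*} [CommRing R] {n : ℕ}
    (A : Matrix (Fin (n + 1)) (Fin (n + 1)) R) (v : Fin (n + 1) → R)
    (hv : ∀ i : Fin n, (A *ᵥ v) i.succ = 0) :
    v 0 * A.det = (A *ᵥ v) 0 * (A.submatrix Fin.succ Fin.succ).det := by
  have hcol : (fun k ↦ ∑ i, v i • A k i) = A *ᵥ v := by
    ext k; simp [mulVec, dotProduct, mul_comm]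
  rw [← smul_eq_mul, ← det_updateCol_sum A 0 v, hcol, det_succ_column_zero, Fin.sum_univ_succ]
  simp [hv, Fin.succ_ne_zero, submatrix]

section Covariance

variable {Ω : Type*} [MeasurableSpace Ω] {μ : Measure Ω}

theorem covar_eq_covariance (f g : Ω → ℝ) : covar μ f g = cov[f, g; μ] := rfl

variable [IsProbabilityMeasure μ]

theorem of_covar_mulVec_eq_integral_mul {ι : Type*} [Fintype ι] {Z : ι → Ω → ℝ}
    (hZ : ∀ i, MemLp (Z i) 2 μ) (v : ι → ℝ) (b : ℝ)
    (hmean : ∫ ω, (∑ j, v j * Z j ω + b) ∂μ = 0) (k : ι) :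
    ((Matrix.of fun i j ↦ covar μ (Z i) (Z j)) *ᵥ v) k =
      ∫ ω, (∑ j, v j * Z j ω + b) * Z k ω ∂μ := by
  have hvZ : ∀ j, MemLp (fun ω ↦ v j * Z j ω) 2 μ := fun j ↦ (hZ j).const_mul (v j)
  have hsum : MemLp (fun ω ↦ ∑ j, v j * Z j ω) 2 μ := memLp_finsetSum _ fun j _ ↦ hvZ j
  calc ((Matrix.of fun i j ↦ covar μ (Z i) (Z j)) *ᵥ v) k
      = cov[Z k, fun ω ↦ ∑ j, v j * Z j ω; μ] := by
        simp only [covariance_fun_sum_right hvZ (hZ k), covariance_const_mul_right]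
        simp [mulVec, dotProduct, covar_eq_covariance, mul_comm]
    _ = cov[Z k, fun ω ↦ ∑ j, v j * Z j ω + b; μ] :=
        (covariance_add_const_right (hsum.integrable one_le_two) b).symm
    _ = ∫ ω, (∑ j, v j * Z j ω + b) * Z k ω ∂μ := by
        have hG : MemLp (fun ω ↦ ∑ j, v j * Z j ω + b) 2 μ := hsum.add (memLp_const b)
        rw [covariance_comm, covariance_eq_sub hG (hZ k)]
        simp only [Pi.mul_apply, hmean, zero_mul, sub_zero]

theorem mul_det_of_covar_cons_eq {n : ℕ} {X : Ω → ℝ} {Y : Fin n → Ω → ℝ}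
    (hX : MemLp X 2 μ) (hY : ∀ i, MemLp (Y i) 2 μ) (a b : ℝ) (c : Fin n → ℝ)
    (hG0 : ∫ ω, (a * X ω + b + ∑ i, c i * Y i ω) ∂μ = 0)
    (hGY : ∀ k, ∫ ω, (a * X ω + b + ∑ i, c i * Y i ω) * Y k ω ∂μ = 0) :
    a * (Matrix.of fun i j ↦ covar μ ((Fin.cons X Y : Fin (n + 1) → Ω → ℝ) i)
        ((Fin.cons X Y : Fin (n + 1) → Ω → ℝ) j)).det =
      (∫ ω, (a * X ω + b + ∑ i, c i * Y i ω) * X ω ∂μ) *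
        (Matrix.of fun i j ↦ covar μ (Y i) (Y j)).det := by
  set Z : Fin (n + 1) → Ω → ℝ := Fin.cons X Y
  set v : Fin (n + 1) → ℝ := Fin.cons a c
  have hG : ∀ ω, a * X ω + b + ∑ i, c i * Y i ω = ∑ j, v j * Z j ω + b := fun ω ↦ by
    simp only [Fin.sum_univ_succ, Fin.cons_zero, Fin.cons_succ, v, Z]; ring
  simp_rw [hG] at hG0 hGY ⊢
  have hv := of_covar_mulVec_eq_integral_mul (Fin.cases hX hY : ∀ i, MemLp (Z i) 2 μ) v b hG0
  have hsub : (Matrix.of fun i j ↦ covar μ (Z i) (Z j)).submatrix Fin.succ Fin.succ =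
      Matrix.of fun i j ↦ covar μ (Y i) (Y j) := rfl
  have h := Matrix.apply_zero_mul_det_eq_of_mulVec_succ_eq_zero _ v
    fun k ↦ (hv k.succ).trans (hGY k)
  rwa [hv 0, hsub] at h

end Covariance

section Regression

variable {Ω : Type*} [MeasurableSpace Ω] {μ : Measure Ω}

theorem two_mul_integral_mul_le_add {f g : Ω → ℝ} (hf : MemLp f 2 μ) (hg : MemLp g 2 μ) :
    2 * ∫ ω, f ω * g ω ∂μ ≤ (∫ ω, f ω ^ 2 ∂μ) + ∫ ω, g ω ^ 2 ∂μ := by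
  rw [← integral_const_mul, ← integral_add hf.integrable_sq hg.integrable_sq]
  exact integral_mono ((hf.integrable_mul hg).const_mul 2) (hf.integrable_sq.add hg.integrable_sq)
    fun ω ↦ by nlinarith [sq_nonneg (f ω - g ω)]

theorem integral_sub_mul_eq_sub {f g h : Ω → ℝ} (hf : MemLp f 2 μ) (hg : MemLp g 2 μ)
    (hh : MemLp h 2 μ) :
    ∫ ω, (f ω - g ω) * h ω ∂μ = (∫ ω, f ω * h ω ∂μ) - ∫ ω, g ω * h ω ∂μ := by
  have hfh : Integrable (fun ω ↦ f ω * h ω) μ := hf.integrable_mul hh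
  have hgh : Integrable (fun ω ↦ g ω * h ω) μ := hg.integrable_mul hh
  simp_rw [sub_mul]
  exact integral_sub hfh hgh

theorem integral_sub_mul_eq_zero {f g h : Ω → ℝ} (hf : MemLp f 2 μ) (hg : MemLp g 2 μ)
    (hh : MemLp h 2 μ) (hfg : ∫ ω, f ω * h ω ∂μ = ∫ ω, g ω * h ω ∂μ) :
    ∫ ω, (f ω - g ω) * h ω ∂μ = 0 := by
  rw [integral_sub_mul_eq_sub hf hg hh, hfg, sub_self]

variable [IsFiniteMeasure μ] {ι : Type*} [Fintype ι] {X D : Ω → ℝ} {Y : ι → Ω → ℝ}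

theorem integral_mul_affine_eq_of_orthogonal (hX : MemLp X 2 μ) (hY : ∀ i, MemLp (Y i) 2 μ)
    (hD : MemLp D 2 μ) (hD0 : ∫ ω, D ω ∂μ = 0) (hDY : ∀ i, ∫ ω, D ω * Y i ω ∂μ = 0)
    (a b : ℝ) (c : ι → ℝ) :
    ∫ ω, D ω * (a * X ω + b + ∑ i, c i * Y i ω) ∂μ = a * ∫ ω, D ω * X ω ∂μ := by
  have hDX : Integrable (fun ω ↦ a * (D ω * X ω)) μ := (hD.integrable_mul hX).const_mul a
  have hDb : Integrable (fun ω ↦ b * D ω) μ := (hD.integrable one_le_two).const_mul b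
  have hDYc : ∀ i, Integrable (fun ω ↦ c i * (D ω * Y i ω)) μ :=
    fun i ↦ (hD.integrable_mul (hY i)).const_mul (c i)
  calc ∫ ω, D ω * (a * X ω + b + ∑ i, c i * Y i ω) ∂μ
      = ∫ ω, a * (D ω * X ω) + b * D ω + ∑ i, c i * (D ω * Y i ω) ∂μ := by
        congr 1; ext ω
        rw [mul_add, Finset.mul_sum]
        simp only [mul_left_comm (D ω)]
        ring
    _ = a * ∫ ω, D ω * X ω ∂μ := by
        have hDXb : Integrable (fun ω ↦ a * (D ω * X ω) + b * D ω) μ := hDX.add hDb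
        rw [integral_add hDXb (integrable_finsetSum _ fun i _ ↦ hDYc i),
          integral_add hDX hDb, integral_finsetSum _ fun i _ ↦ hDYc i]
        simp [integral_const_mul, hD0, hDY]

theorem integral_sub_eq_zero {f g : Ω → ℝ} (hf : MemLp f 2 μ) (hg : MemLp g 2 μ)
    (hfg : ∫ ω, f ω ∂μ = ∫ ω, g ω ∂μ) : ∫ ω, (f ω - g ω) ∂μ = 0 := by
  rw [integral_sub (hf.integrable one_le_two) (hg.integrable one_le_two), hfg, sub_self]

theorem memLp_affine (hX : MemLp X 2 μ) (hY : ∀ i, MemLp (Y i) 2 μ) (a b : ℝ) (c : ι → ℝ) :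
    MemLp (fun ω ↦ a * X ω + b + ∑ i, c i * Y i ω) 2 μ :=
  ((hX.const_mul a).add (memLp_const b)).add (memLp_finsetSum _ fun i _ ↦ (hY i).const_mul (c i))

theorem integral_affine_sq_eq_of_orthogonal (hX : MemLp X 2 μ) (hY : ∀ i, MemLp (Y i) 2 μ)
    (a b : ℝ) (c : ι → ℝ) (hG0 : ∫ ω, (a * X ω + b + ∑ i, c i * Y i ω) ∂μ = 0)
    (hGY : ∀ k, ∫ ω, (a * X ω + b + ∑ i, c i * Y i ω) * Y k ω ∂μ = 0) :
    ∫ ω, (a * X ω + b + ∑ i, c i * Y i ω) ^ 2 ∂μ =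
      a * ∫ ω, (a * X ω + b + ∑ i, c i * Y i ω) * X ω ∂μ := by
  simp only [sq]
  exact integral_mul_affine_eq_of_orthogonal hX hY (memLp_affine hX hY a b c) hG0 hGY a b c

theorem integral_mul_le_integral_affine_mul_of_orthogonal (hX : MemLp X 2 μ)
    (hY : ∀ i, MemLp (Y i) 2 μ) {a : ℝ} (ha : 0 < a) (b : ℝ) (c : ι → ℝ)
    (hG0 : ∫ ω, (a * X ω + b + ∑ i, c i * Y i ω) ∂μ = 0)
    (hGY : ∀ k, ∫ ω, (a * X ω + b + ∑ i, c i * Y i ω) * Y k ω ∂μ = 0)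
    (hD : MemLp D 2 μ) (hD0 : ∫ ω, D ω ∂μ = 0) (hDY : ∀ i, ∫ ω, D ω * Y i ω ∂μ = 0)
    (hDsq : ∫ ω, D ω ^ 2 ∂μ ≤ ∫ ω, (a * X ω + b + ∑ i, c i * Y i ω) ^ 2 ∂μ) :
    ∫ ω, D ω * X ω ∂μ ≤ ∫ ω, (a * X ω + b + ∑ i, c i * Y i ω) * X ω ∂μ := by
  refine le_of_mul_le_mul_left ?_ ha
  rw [← integral_mul_affine_eq_of_orthogonal hX hY hD hD0 hDY a b c,
    ← integral_affine_sq_eq_of_orthogonal hX hY a b c hG0 hGY]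
  linarith [two_mul_integral_mul_le_add hD (memLp_affine hX hY a b c)]

end Regression

theorem stmt11_general {Ω : Type*} [MeasurableSpace Ω] (μ : Measure Ω) [IsProbabilityMeasure μ]
    (n : ℕ) (X : Ω → ℝ) (Y : Fin n → Ω → ℝ) (L : Ω → ℝ)
    (hX : MemLp X 2 μ) (hY : ∀ i, MemLp (Y i) 2 μ)
    (hLmean : ∫ ω, L ω ∂μ = 1) (hL : MemLp L 2 μ)
    (SXY : Matrix (Fin (n + 1)) (Fin (n + 1)) ℝ)
    (hSXY : SXY = Matrix.of fun i j =>
      covar μ ((Fin.cons X Y : Fin (n+1) → Ω → ℝ) i) ((Fin.cons X Y : Fin (n+1) → Ω → ℝ) j))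
    (SY : Matrix (Fin n) (Fin n) ℝ)
    (hSY : SY = Matrix.of fun i j => covar μ (Y i) (Y j))
    (hinvY : IsUnit SY.det)
    (δ : ℝ) (hδ : 0 < δ)
    (a : ℝ) (ha : 0 < a) (b : ℝ) (c : Fin n → ℝ)
    (Lhat : Ω → ℝ)
    (hLhat : Lhat = fun ω => a * X ω + b + (∑ i, c i * Y i ω) + L ω)
    (hLhatMean : ∫ ω, Lhat ω ∂μ = 1)
    (hLhatDiv : ∫ ω, (Lhat ω - L ω) ^ 2 ∂μ = δ)
    (hLhatMom : ∀ i, ∫ ω, Lhat ω * Y i ω ∂μ = ∫ ω, L ω * Y i ω ∂μ) :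
    (∀ L' : Ω → ℝ, MemLp L' 2 μ → (∫ ω, L' ω ∂μ) = 1 →
      (∫ ω, (L' ω - L ω) ^ 2 ∂μ) ≤ δ →
      (∀ i, (∫ ω, L' ω * Y i ω ∂μ) = ∫ ω, L ω * Y i ω ∂μ) →
      (∫ ω, L' ω * X ω ∂μ) ≤ ∫ ω, Lhat ω * X ω ∂μ) ∧
    ∫ ω, Lhat ω * X ω ∂μ =
      (∫ ω, L ω * X ω ∂μ) + Real.sqrt (δ * (SXY.det / SY.det)) := by
  set G : Ω → ℝ := fun ω ↦ a * X ω + b + ∑ i, c i * Y i ω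
  have hLhatG : ∀ ω, Lhat ω - L ω = G ω := fun ω ↦ by simp [hLhat, G]
  have hLhat_memLp : MemLp Lhat 2 μ := by rw [hLhat]; exact (memLp_affine hX hY a b c).add hL
  have hG0 : ∫ ω, G ω ∂μ = 0 := by
    simpa only [hLhatG] using integral_sub_eq_zero hLhat_memLp hL (hLhatMean.trans hLmean.symm)
  have hGY : ∀ i, ∫ ω, G ω * Y i ω ∂μ = 0 := fun i ↦ by
    simpa only [hLhatG] using integral_sub_mul_eq_zero hLhat_memLp hL (hY i) (hLhatMom i)
  have hGG : ∫ ω, G ω ^ 2 ∂μ = δ := by simpa only [hLhatG] using hLhatDiv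
  have hGX : ∫ ω, G ω * X ω ∂μ = δ / a := by
    rw [eq_div_iff ha.ne', mul_comm, ← hGG,
      integral_affine_sq_eq_of_orthogonal hX hY a b c hG0 hGY]
  have hLhatX : ∫ ω, Lhat ω * X ω ∂μ = (∫ ω, L ω * X ω ∂μ) + ∫ ω, G ω * X ω ∂μ := by
    rw [← sub_eq_iff_eq_add', ← integral_sub_mul_eq_sub hLhat_memLp hL hX]
    simp only [hLhatG]
  refine ⟨fun L' hL' h1 hdiv hmom ↦ ?_, ?_⟩
  · rw [hLhatX, ← sub_le_iff_le_add', ← integral_sub_mul_eq_sub hL' hL hX]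
    exact integral_mul_le_integral_affine_mul_of_orthogonal hX hY ha b c hG0 hGY (hL'.sub hL)
      (integral_sub_eq_zero hL' hL (h1.trans hLmean.symm))
      (fun i ↦ integral_sub_mul_eq_zero hL' hL (hY i) (hmom i)) (hGG ▸ hdiv)
  · have hdet : a * SXY.det = δ / a * SY.det := by
      rw [hSXY, hSY, mul_det_of_covar_cons_eq hX hY a b c hG0 hGY, hGX]
    have hratio : δ * (SXY.det / SY.det) = (δ / a) ^ 2 := by
      field_simp [hinvY.ne_zero] at hdet ⊢
      linear_combination hdet
    rw [hLhatX, hGX, hratio, Real.sqrt_sq (div_pos hδ ha).le]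

/-- Without the nonnegativity constraint, `L̂ = aX + b + cᵀY + L` satisfying the
three constraints maximizes `E_μ[L'X]`, and the optimal value equals
`E_μ[LX] + √(δ · det Σ_μ(X,Y)/det Σ_μ(Y))`. -/
theorem stmt11 {Ω : Type*} [MeasurableSpace Ω] (μ : Measure Ω) [IsProbabilityMeasure μ]
    (n : ℕ) (X : Ω → ℝ) (Y : Fin n → Ω → ℝ) (L : Ω → ℝ)
    (hX : MemLp X 2 μ) (hY : ∀ i, MemLp (Y i) 2 μ)
    (hLmean : ∫ ω, L ω ∂μ = 1) (hL : MemLp L 2 μ)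
    (SXY : Matrix (Fin (n + 1)) (Fin (n + 1)) ℝ)
    (hSXY : SXY = Matrix.of fun i j =>
      covar μ ((Fin.cons X Y : Fin (n+1) → Ω → ℝ) i) ((Fin.cons X Y : Fin (n+1) → Ω → ℝ) j))
    (SY : Matrix (Fin n) (Fin n) ℝ)
    (hSY : SY = Matrix.of fun i j => covar μ (Y i) (Y j))
    (hinv : IsUnit SXY.det) (hinvY : IsUnit SY.det)
    (δ : ℝ) (hδ : 0 < δ)
    (a : ℝ) (ha : 0 < a) (b : ℝ) (c : Fin n → ℝ)
    (Lhat : Ω → ℝ)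
    (hLhat : Lhat = fun ω => a * X ω + b + (∑ i, c i * Y i ω) + L ω)
    (hLhatMean : ∫ ω, Lhat ω ∂μ = 1)
    (hLhatDiv : ∫ ω, (Lhat ω - L ω) ^ 2 ∂μ = δ)
    (hLhatMom : ∀ i, ∫ ω, Lhat ω * Y i ω ∂μ = ∫ ω, L ω * Y i ω ∂μ) :
    (∀ L' : Ω → ℝ, MemLp L' 2 μ → (∫ ω, L' ω ∂μ) = 1 →
      (∫ ω, (L' ω - L ω) ^ 2 ∂μ) ≤ δ →
      (∀ i, (∫ ω, L' ω * Y i ω ∂μ) = ∫ ω, L ω * Y i ω ∂μ) →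
      (∫ ω, L' ω * X ω ∂μ) ≤ ∫ ω, Lhat ω * X ω ∂μ) ∧
    ∫ ω, Lhat ω * X ω ∂μ =
      (∫ ω, L ω * X ω ∂μ) + Real.sqrt (δ * (SXY.det / SY.det)) :=
  stmt11_general μ n X Y L hX hY hLmean hL SXY hSXY SY hSY hinvY δ hδ a ha b c Lhat hLhat hLhatMean
    hLhatDiv hLhatMom
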